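/- Let M be a matroid on E, I ⊆ E independent, and X ⊆ span_M(I). Then there is a unique minimal subset I' ⊆ I with X ⊆ span_M(I'), and it equals (X ∩ I) ∪ ⋃_{e ∈ X \ I} (C_M(e,I) \ {e}), where C_M(e,I) is the fundamental circuit of e on I. -/

import Mathlib

open Set

variable {α : Type*}

/-- `C` is a circuit of the matroid `M`: a minimal dependent subset of the ground set. -/
def MCircuit (M : Matroid α) (C : Set α) : Prop :=
  C ⊆ M.E ∧ ¬ M.Indep C ∧ ∀ D, D ⊂ C → M.Indep D

/-- `C` is the fundamental circuit of `e` on the independent set `I`. -/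
def FundCircuit (M : Matroid α) (e : α) (I C : Set α) : Prop :=
  MCircuit M C ∧ e ∈ C ∧ C ⊆ insert e I

/-!
For `I` independent, an element `x ∈ I` lies in `cl(J)` for `J ⊆ I` only if `x ∈ J`, since
`cl(J) ∩ I = J`. For `e ∈ cl(I) \ I`, the fundamental circuit is
`C(e,I) = insert e (⋂ {J ⊆ I | e ∈ cl(J)})`, so `C(e,I) \ {e}` lies in every `J ⊆ I` with
`e ∈ cl(J)`. Hence each piece of `(X ∩ I) ∪ ⋃ (C(e,I) \ {e})` lies in any `I' ⊆ I` spanning `X`,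
while the union spans `X` because each `e ∈ X \ I` is spanned by `C(e,I) \ {e}`.
-/

variable {M : Matroid α} {C I J : Set α} {e : α}

lemma MCircuit.isCircuit (hC : MCircuit M C) : M.IsCircuit C :=
  Matroid.isCircuit_iff_forall_ssubset.2 ⟨⟨hC.2.1, hC.1⟩, fun D hD ↦ hC.2.2 D hD⟩

lemma FundCircuit.sdiff_singleton_subset (hC : FundCircuit M e I C) : C \ {e} ⊆ I :=
  sdiff_singleton_subset_iff.2 hC.2.2

lemma FundCircuit.mem_closure_sdiff_singleton (hC : FundCircuit M e I C) :
    e ∈ M.closure (C \ {e}) :=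
  hC.1.isCircuit.mem_closure_sdiff_singleton_of_mem hC.2.1

lemma Matroid.fundCircuit_sdiff_singleton_subset_of_mem_closure (hJI : J ⊆ I)
    (he : e ∈ M.closure J) : M.fundCircuit e I \ {e} ⊆ J := by
  rw [fundCircuit_eq_sInter (M.closure_subset_closure hJI he), sdiff_singleton_subset_iff]
  exact insert_subset_insert (sInter_subset_of_mem ⟨hJI, he⟩)

lemma FundCircuit.sdiff_singleton_subset_of_mem_closure (hI : M.Indep I)
    (hC : FundCircuit M e I C) (hJI : J ⊆ I) (he : e ∈ M.closure J) : C \ {e} ⊆ J := by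
  rw [hC.1.isCircuit.eq_fundCircuit_of_subset hI hC.2.2]
  exact Matroid.fundCircuit_sdiff_singleton_subset_of_mem_closure hJI he

theorem stmt7_general (M : Matroid α) (I : Set α) (hI : M.Indep I)
    (X : Set α)
    (Cf : α → Set α) (hCf : ∀ e ∈ X \ I, FundCircuit M e I (Cf e)) :
    ((X ∩ I) ∪ (⋃ e ∈ X \ I, Cf e \ {e})) ⊆ I ∧
    X ⊆ M.closure ((X ∩ I) ∪ (⋃ e ∈ X \ I, Cf e \ {e})) ∧
    ∀ I' ⊆ I, X ⊆ M.closure I' → ((X ∩ I) ∪ (⋃ e ∈ X \ I, Cf e \ {e})) ⊆ I' := by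
  set G := (X ∩ I) ∪ (⋃ e ∈ X \ I, Cf e \ {e})
  have hGI : G ⊆ I :=
    union_subset inter_subset_right (iUnion₂_subset fun e he ↦ (hCf e he).sdiff_singleton_subset)
  refine ⟨hGI, fun x hxX ↦ ?_, fun I' hI'I hXI' ↦ ?_⟩
  · by_cases hxI : x ∈ I
    · exact M.mem_closure_of_mem (Or.inl ⟨hxX, hxI⟩) (hGI.trans hI.subset_ground)
    · have hxXI : x ∈ X \ I := ⟨hxX, hxI⟩
      have hxG : Cf x \ {x} ⊆ G :=
        subset_union_of_subset_right (subset_biUnion_of_mem (u := fun e ↦ Cf e \ {e}) hxXI) _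
      exact M.closure_subset_closure hxG (hCf x hxXI).mem_closure_sdiff_singleton
  · refine union_subset (fun x hx ↦ ?_) (iUnion₂_subset fun e he ↦ ?_)
    · exact (hI.closure_inter_eq_self_of_subset hI'I).subset (mem_inter (hXI' hx.1) hx.2)
    · exact (hCf e he).sdiff_singleton_subset_of_mem_closure hI hI'I (hXI' he.1)

/-- For independent `I` and `X ⊆ span_M(I)`, the set
`G = (X ∩ I) ∪ ⋃_{e ∈ X \ I} (C_M(e,I) \ {e})` is the unique minimal subset of `I`
spanning `X`: it is contained in `I`, spans `X`, and is contained in every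
`I' ⊆ I` spanning `X`. -/
theorem stmt7 (M : Matroid α) [M.Finitary] (I : Set α) (hI : M.Indep I)
    (X : Set α) (hX : X ⊆ M.closure I)
    (Cf : α → Set α) (hCf : ∀ e ∈ X \ I, FundCircuit M e I (Cf e)) :
    ((X ∩ I) ∪ (⋃ e ∈ X \ I, Cf e \ {e})) ⊆ I ∧
    X ⊆ M.closure ((X ∩ I) ∪ (⋃ e ∈ X \ I, Cf e \ {e})) ∧
    ∀ I' ⊆ I, X ⊆ M.closure I' → ((X ∩ I) ∪ (⋃ e ∈ X \ I, Cf e \ {e})) ⊆ I' :=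
  stmt7_general M I hI X Cf hCf
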